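/- Let H=(X,S) be a hypergraph with X = {x_1,…,x_n} and S = {s_1,…,s_m}, where every hyperedge s_j is nonempty and no element x_i belongs to all hyperedges s_1,…,s_m. Define the split graph G=(V,E) by V := {a,b} ∪ {u_i : i ∈ [n]} ∪ {w_j : j ∈ [m]} and E := all 2-element subsets of {a,b} ∪ {u_i : i ∈ [n]} together with {{u_i, w_j} : i ∈ [n], j ∈ [m], x_i ∈ s_j}. Then the map F : C_{𝒞ℛ𝒟ℱ,G}[{a}] → Tr(H) given by F(g) = {x_i : i ∈ [n], g(u_i) = 1} is a bijection onto the set of minimal hitting sets of H. -/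

import Mathlib

open Set

variable {V : Type*}

/-- The set of vertices on which `f` takes value `i`. -/
def Vlevel (f : V → ℕ) (i : ℕ) : Set V := {v | f v = i}

/-- Closed neighborhood of `v` inside the induced subgraph `G[W]`. -/
def closedNbhdIn (G : SimpleGraph V) (W : Set V) (v : V) : Set V :=
  {u ∈ W | u = v ∨ G.Adj u v}

/-- Closed neighborhood of a set `A` inside the induced subgraph `G[W]`. -/
def closedNbhdSetIn (G : SimpleGraph V) (W A : Set V) : Set V :=
  ⋃ u ∈ A, closedNbhdIn G W u

/-- Private neighborhood `P_{G[W],A}(v) = N[v] \ N[A \ {v}]` inside `G[W]`. -/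
def privNbhd (G : SimpleGraph V) (W A : Set V) (v : V) : Set V :=
  closedNbhdIn G W v \ closedNbhdSetIn G W (A \ {v})

/-- Closed neighborhood `N[v]` in `G`. -/
def closedNbhd (G : SimpleGraph V) (v : V) : Set V := {u | u = v ∨ G.Adj u v}

/-- Closed neighborhood `N[A]` of a set in `G`. -/
def closedNbhdSet (G : SimpleGraph V) (A : Set V) : Set V := ⋃ v ∈ A, closedNbhd G v

/-- Open neighborhood `N(A)` of a set in `G`. -/
def openNbhdSet (G : SimpleGraph V) (A : Set V) : Set V := ⋃ v ∈ A, G.neighborSet v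

/-- Characteristic function of a set. -/
noncomputable def chi (S : Set V) : V → ℕ := S.indicator 1

/-- Roman dominating function: values in {0,1,2}, and every vertex of value 0 has
a neighbor of value 2. -/
def IsRDF (G : SimpleGraph V) (f : V → ℕ) : Prop :=
  (∀ v, f v ≤ 2) ∧ ∀ v, f v = 0 → ∃ u, G.Adj v u ∧ f u = 2

/-- `f` is minimal with respect to the pointwise order among functions with property `P`. -/
def MinimalWrt (P : (V → ℕ) → Prop) (f : V → ℕ) : Prop :=
  P f ∧ ∀ g, P g → g ≤ f → g = f

/-- `C_{P,G}[A]`: minimal functions with property `P` whose set of vertices of value 2 is `A`. -/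
def CSet (P : (V → ℕ) → Prop) (A : Set V) : Set (V → ℕ) :=
  {f | MinimalWrt P f ∧ Vlevel f 2 = A}

/-- Nice Roman domination property. -/
def IsNiceRDP (G : SimpleGraph V) (P : (V → ℕ) → Prop) : Prop :=
  (∀ f, P f → IsRDF G f) ∧
  (∀ f, P f → ∀ v ∈ Vlevel f 0, P (f + chi {v})) ∧
  (∀ f, P f → ∀ v ∈ Vlevel f 2,
    (P (f - chi {v}) ↔ privNbhd G (Vlevel f 0 ∪ Vlevel f 2) (Vlevel f 2) v ⊆ {v}))

/-- Maximal Roman dominating function: an Rdf such that `V_0(f)` is not a dominating set. -/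
def IsMRDF (G : SimpleGraph V) (f : V → ℕ) : Prop :=
  IsRDF G f ∧ closedNbhdSet G (Vlevel f 0) ≠ Set.univ

/-- Total Roman dominating function: an Rdf such that `G[V_1(f) ∪ V_2(f)]` has no isolated
vertices. -/
def IsTRDF (G : SimpleGraph V) (f : V → ℕ) : Prop :=
  IsRDF G f ∧ ∀ v ∈ Vlevel f 1 ∪ Vlevel f 2, ∃ u ∈ Vlevel f 1 ∪ Vlevel f 2, G.Adj v u

/-- Connected Roman dominating function: an Rdf such that `G[V_1(f) ∪ V_2(f)]` is connected. -/
def IsCRDF (G : SimpleGraph V) (f : V → ℕ) : Prop :=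
  IsRDF G f ∧ (G.induce (Vlevel f 1 ∪ Vlevel f 2)).Connected

/-- Vertex set of the split graph built from a hypergraph: `Sum.inl 0 = a`,
`Sum.inl 1 = b`, `Sum.inr (Sum.inl i) = u_i`, `Sum.inr (Sum.inr j) = w_j`. -/
abbrev SplitVert (n m : ℕ) := (Fin 2) ⊕ ((Fin n) ⊕ (Fin m))

/-- "Clique side" vertices: `a`, `b` and the `u_i`. -/
def SplitLeft {n m : ℕ} : SplitVert n m → Prop
  | Sum.inr (Sum.inr _) => False
  | _ => True

/-- `x = u_i` and `y = w_j` with `x_i ∈ s_j`. -/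
def UWEdge {n m : ℕ} (s : Fin m → Set (Fin n)) (x y : SplitVert n m) : Prop :=
  ∃ i j, x = Sum.inr (Sum.inl i) ∧ y = Sum.inr (Sum.inr j) ∧ i ∈ s j

/-- The split graph built from the hypergraph `(Fin n, s)`: a clique on
`{a, b} ∪ {u_i : i}` together with edges `u_i w_j` whenever `x_i ∈ s_j`. -/
def SplitGraph (n m : ℕ) (s : Fin m → Set (Fin n)) : SimpleGraph (SplitVert n m) where
  Adj x y := x ≠ y ∧ (SplitLeft x ∧ SplitLeft y ∨ UWEdge s x y ∨ UWEdge s y x)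
  symm := by
    constructor
    rintro x y ⟨hxy, h⟩
    exact ⟨hxy.symm, by tauto⟩
  loopless := by constructor; rintro x ⟨h, -⟩; exact h rfl

/-- `D` is a minimal hitting set (transversal) of the hypergraph `(Fin n, s)`. -/
def IsMinHittingSet {n m : ℕ} (s : Fin m → Set (Fin n)) (D : Set (Fin n)) : Prop :=
  (∀ j, (D ∩ s j).Nonempty) ∧
  ∀ D' ⊆ D, (∀ j, (D' ∩ s j).Nonempty) → D' = D

/-!
A cRdf `g` with `V₂(g) = {a}` gives every `w_j` the value `1`, as no neighbour `u_i` of `w_j`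
carries `2`; connectivity of `G[V₁ ∪ V₂]` then says exactly that every `w_j` has a neighbour `u_i`
with `g(u_i) = 1`, i.e. that `{x_i : g(u_i) = 1}` hits every `s_j`. Conversely a hitting set `D`
yields the cRdf `a ↦ 2, b ↦ 0, u_i ↦ [x_i ∈ D], w_j ↦ 1`, which is monotone in `D` and lies below
every such `g` with `{x_i : g(u_i) = 1} = D`. Anything below it is `2` only at `a`, since `b`
needs a neighbour of value `2`. Hence minimal cRdfs and minimal hitting sets correspond.
-/

lemma Vlevel_two_subset_of_le {f g : V → ℕ} (hf : ∀ v, f v ≤ 2) (hle : g ≤ f) :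
    Vlevel g 2 ⊆ Vlevel f 2 :=
  fun v hv => le_antisymm (hf v) (hv ▸ hle v)

lemma SimpleGraph.Connected.exists_adj_of_induce {G : SimpleGraph V} {W : Set V}
    (h : (G.induce W).Connected) {v x : V} (hv : v ∈ W) (hx : x ∈ W) (hvx : v ≠ x) :
    ∃ u ∈ W, G.Adj v u := by
  have : Nontrivial W := ⟨⟨v, hv⟩, ⟨x, hx⟩, by simpa using hvx⟩
  obtain ⟨u, hu⟩ := h.preconnected.exists_adj_of_nontrivial ⟨v, hv⟩
  exact ⟨u, u.2, hu⟩

namespace SplitGraph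

variable {n m : ℕ} {s : Fin m → Set (Fin n)}

lemma adj_of_splitLeft {x y : SplitVert n m} (hxy : x ≠ y) (hx : SplitLeft x)
    (hy : SplitLeft y) : (SplitGraph n m s).Adj x y :=
  ⟨hxy, Or.inl ⟨hx, hy⟩⟩

lemma adj_u_w {i : Fin n} {j : Fin m} (h : i ∈ s j) :
    (SplitGraph n m s).Adj (Sum.inr (Sum.inl i)) (Sum.inr (Sum.inr j)) :=
  ⟨by simp, Or.inr (Or.inl ⟨i, j, rfl, rfl, h⟩)⟩

lemma exists_eq_u_of_adj_w {j : Fin m} {y : SplitVert n m}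
    (h : (SplitGraph n m s).Adj (Sum.inr (Sum.inr j)) y) :
    ∃ i, y = Sum.inr (Sum.inl i) ∧ i ∈ s j := by
  obtain ⟨-, ⟨hl, -⟩ | ⟨i, j', hx, -, -⟩ | ⟨i, j', hy, hx, hi⟩⟩ := h
  · exact hl.elim
  · simp at hx
  · obtain rfl : j' = j := by simpa using hx.symm
    exact ⟨i, hy, hi⟩

noncomputable def splitRdf (D : Set (Fin n)) : SplitVert n m → ℕ
  | Sum.inl k => if k = 0 then 2 else 0
  | Sum.inr (Sum.inl i) => D.indicator 1 i
  | Sum.inr (Sum.inr _) => 1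

def uLevelOne (f : SplitVert n m → ℕ) : Set (Fin n) := {i | f (Sum.inr (Sum.inl i)) = 1}

section splitRdf

variable {D D' : Set (Fin n)}

@[simp] lemma splitRdf_a : splitRdf (m := m) D (Sum.inl 0) = 2 := by simp [splitRdf]

@[simp] lemma splitRdf_b : splitRdf (m := m) D (Sum.inl 1) = 0 := by simp [splitRdf]

@[simp] lemma splitRdf_u (i : Fin n) :
    splitRdf (m := m) D (Sum.inr (Sum.inl i)) = D.indicator 1 i :=
  rfl

@[simp] lemma splitRdf_w (j : Fin m) : splitRdf D (Sum.inr (Sum.inr j) : SplitVert n m) = 1 :=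
  rfl

@[simp] lemma uLevelOne_splitRdf (D : Set (Fin n)) : uLevelOne (splitRdf (m := m) D) = D := by
  ext i
  by_cases hi : i ∈ D <;> simp [uLevelOne, hi]

lemma splitRdf_le_two (v : SplitVert n m) : splitRdf D v ≤ 2 := by
  rcases v with k | i | j
  · fin_cases k <;> simp
  · by_cases hi : i ∈ D <;> simp [hi]
  · simp

lemma Vlevel_splitRdf_two (D : Set (Fin n)) :
    Vlevel (splitRdf (m := m) D) 2 = {Sum.inl 0} := by
  ext v
  rcases v with k | i | j
  · fin_cases k <;> simp [Vlevel]
  · by_cases hi : i ∈ D <;> simp [Vlevel, hi]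
  · simp [Vlevel]

lemma splitRdf_mono (h : D ⊆ D') : splitRdf (m := m) D ≤ splitRdf D' := by
  rintro (k | i | j)
  · rfl
  · exact indicator_le_indicator_of_subset h (fun _ => Nat.zero_le _) i
  · rfl

lemma mem_support_splitRdf {x : SplitVert n m} :
    x ∈ Vlevel (splitRdf D) 1 ∪ Vlevel (splitRdf D) 2 ↔
      x = Sum.inl 0 ∨ (∃ i ∈ D, x = Sum.inr (Sum.inl i)) ∨ ∃ j, x = Sum.inr (Sum.inr j) := by
  rcases x with k | i | j
  · fin_cases k <;> simp [Vlevel]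
  · by_cases hi : i ∈ D <;> simp [Vlevel, hi]
  · simp [Vlevel]

lemma isCRDF_splitRdf (hD : ∀ j, (D ∩ s j).Nonempty) :
    IsCRDF (SplitGraph n m s) (splitRdf D) := by
  refine ⟨⟨splitRdf_le_two, fun v hv => ⟨Sum.inl 0, adj_of_splitLeft ?_ ?_ trivial, by simp⟩⟩, ?_⟩
  · rintro rfl
    simp at hv
  · rcases v with _ | _ | _ <;> simp_all [SplitLeft]
  set W := Vlevel (splitRdf (m := m) D) 1 ∪ Vlevel (splitRdf D) 2
  have haW : (Sum.inl 0 : SplitVert n m) ∈ W := mem_support_splitRdf.2 (Or.inl rfl)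
  have huW {i : Fin n} (hi : i ∈ D) : (Sum.inr (Sum.inl i) : SplitVert n m) ∈ W :=
    mem_support_splitRdf.2 (Or.inr (Or.inl ⟨i, hi, rfl⟩))
  have hua {i : Fin n} (hi : i ∈ D) :
      ((SplitGraph n m s).induce W).Adj ⟨_, huW hi⟩ ⟨_, haW⟩ :=
    adj_of_splitLeft (by simp) trivial trivial
  refine (SimpleGraph.connected_iff_exists_forall_reachable _).2 ⟨⟨_, haW⟩, ?_⟩
  rintro ⟨z, hz⟩
  refine SimpleGraph.Reachable.symm ?_
  rcases mem_support_splitRdf.1 hz with rfl | ⟨i, hi, rfl⟩ | ⟨j, rfl⟩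
  · rfl
  · exact (hua hi).reachable
  · obtain ⟨i, hiD, hij⟩ := hD j
    have hwu : ((SplitGraph n m s).induce W).Adj ⟨_, hz⟩ ⟨_, huW hiD⟩ := (adj_u_w hij).symm
    exact hwu.reachable.trans (hua hiD).reachable

end splitRdf

section level2

variable {f : SplitVert n m → ℕ} (hf : IsCRDF (SplitGraph n m s) f)
  (h2 : Vlevel f 2 = {Sum.inl 0})
include hf h2

lemma w_eq_one_of_isCRDF (j : Fin m) : f (Sum.inr (Sum.inr j)) = 1 := by
  have hne2 : f (Sum.inr (Sum.inr j)) ≠ 2 := fun h => by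
    have : (Sum.inr (Sum.inr j) : SplitVert n m) ∈ Vlevel f 2 := h
    simp [h2] at this
  have hne0 : f (Sum.inr (Sum.inr j)) ≠ 0 := fun h0 => by
    obtain ⟨u, hadj, hu⟩ := hf.1.2 _ h0
    obtain ⟨i, rfl, -⟩ := exists_eq_u_of_adj_w hadj
    have : (Sum.inr (Sum.inl i) : SplitVert n m) ∈ Vlevel f 2 := hu
    simp [h2] at this
  have := hf.1.1 (Sum.inr (Sum.inr j))
  omega

lemma uLevelOne_inter_nonempty_of_isCRDF (j : Fin m) : (uLevelOne f ∩ s j).Nonempty := by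
  have haW : (Sum.inl 0 : SplitVert n m) ∈ Vlevel f 1 ∪ Vlevel f 2 := by simp [h2]
  have hwW : (Sum.inr (Sum.inr j) : SplitVert n m) ∈ Vlevel f 1 ∪ Vlevel f 2 :=
    Or.inl (w_eq_one_of_isCRDF hf h2 j)
  obtain ⟨u, hu, hadj⟩ := hf.2.exists_adj_of_induce hwW haW (by simp)
  obtain ⟨i, rfl, hi⟩ := exists_eq_u_of_adj_w hadj
  refine ⟨i, ?_, hi⟩
  rcases hu with hu | hu
  · exact hu
  · simp [h2] at hu

lemma splitRdf_uLevelOne_le_of_isCRDF : splitRdf (uLevelOne f) ≤ f := by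
  rintro (k | i | j)
  · fin_cases k
    · have : (Sum.inl 0 : SplitVert n m) ∈ Vlevel f 2 := by simp [h2]
      simp [show f (Sum.inl 0) = 2 from this]
    · simp
  · by_cases hi : f (Sum.inr (Sum.inl i)) = 1 <;> simp [uLevelOne, hi]
  · simp [w_eq_one_of_isCRDF hf h2 j]

end level2

lemma Vlevel_two_eq_of_le_splitRdf {D : Set (Fin n)} {g : SplitVert n m → ℕ}
    (hg : IsRDF (SplitGraph n m s) g) (hle : g ≤ splitRdf D) : Vlevel g 2 = {Sum.inl 0} := by
  have hb : g (Sum.inl 1) = 0 := by simpa using hle (Sum.inl 1)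
  obtain ⟨u, -, hu⟩ := hg.2 _ hb
  rw [← Nonempty.subset_singleton_iff ⟨u, hu⟩, ← Vlevel_splitRdf_two D]
  exact Vlevel_two_subset_of_le splitRdf_le_two hle

lemma uLevelOne_subset_of_le_splitRdf {D : Set (Fin n)} {g : SplitVert n m → ℕ}
    (hle : g ≤ splitRdf D) : uLevelOne g ⊆ D := fun i hi => by
  by_contra hiD
  simpa [hiD, show g (Sum.inr (Sum.inl i)) = 1 from hi] using hle (Sum.inr (Sum.inl i))

lemma splitRdf_uLevelOne_of_minimal {f : SplitVert n m → ℕ}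
    (hf : MinimalWrt (IsCRDF (SplitGraph n m s)) f) (h2 : Vlevel f 2 = {Sum.inl 0}) :
    splitRdf (uLevelOne f) = f :=
  hf.2 _ (isCRDF_splitRdf (uLevelOne_inter_nonempty_of_isCRDF hf.1 h2))
    (splitRdf_uLevelOne_le_of_isCRDF hf.1 h2)

lemma isMinHittingSet_uLevelOne {f : SplitVert n m → ℕ}
    (hf : MinimalWrt (IsCRDF (SplitGraph n m s)) f) (h2 : Vlevel f 2 = {Sum.inl 0}) :
    IsMinHittingSet s (uLevelOne f) := by
  refine ⟨uLevelOne_inter_nonempty_of_isCRDF hf.1 h2, fun D hD hhit => ?_⟩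
  have hle : splitRdf D ≤ f := splitRdf_uLevelOne_of_minimal hf h2 ▸ splitRdf_mono hD
  rw [← hf.2 _ (isCRDF_splitRdf hhit) hle, uLevelOne_splitRdf]

lemma minimalWrt_splitRdf {D : Set (Fin n)} (hD : IsMinHittingSet s D) :
    MinimalWrt (IsCRDF (SplitGraph n m s)) (splitRdf D) := by
  refine ⟨isCRDF_splitRdf hD.1, fun g hg hle => le_antisymm hle ?_⟩
  have h2 := Vlevel_two_eq_of_le_splitRdf hg.1 hle
  have hgD : uLevelOne g = D :=
    hD.2 _ (uLevelOne_subset_of_le_splitRdf hle) (uLevelOne_inter_nonempty_of_isCRDF hg h2)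
  exact hgD ▸ splitRdf_uLevelOne_le_of_isCRDF hg h2

end SplitGraph

open SplitGraph in
theorem stmt17_general (n m : ℕ) (s : Fin m → Set (Fin n)) :
    Set.BijOn
      (fun g : SplitVert n m → ℕ => {i : Fin n | g (Sum.inr (Sum.inl i)) = 1})
      (CSet (IsCRDF (SplitGraph n m s)) {Sum.inl 0})
      {D : Set (Fin n) | IsMinHittingSet s D} :=
  Set.InvOn.bijOn (f' := splitRdf)
    ⟨fun _ hf => splitRdf_uLevelOne_of_minimal hf.1 hf.2, fun D _ => uLevelOne_splitRdf D⟩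
    (fun _ hf => isMinHittingSet_uLevelOne hf.1 hf.2)
    (fun _ hD => ⟨minimalWrt_splitRdf hD, Vlevel_splitRdf_two _⟩)

/-- `F(g) = {x_i : g(u_i) = 1}` is a bijection from
`C_{CRDF,G}[{a}]` onto the set of minimal hitting sets of the hypergraph. -/
theorem stmt17 (n m : ℕ) (s : Fin m → Set (Fin n))
    (hne : ∀ j, (s j).Nonempty)
    (hnotall : ∀ i : Fin n, ∃ j, i ∉ s j) :
    Set.BijOn
      (fun g : SplitVert n m → ℕ => {i : Fin n | g (Sum.inr (Sum.inl i)) = 1})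
      (CSet (IsCRDF (SplitGraph n m s)) {Sum.inl 0})
      {D : Set (Fin n) | IsMinHittingSet s D} :=
  stmt17_general n m s
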